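/- arXiv:2601.18387 — 6 statements merged into one kernel-verified Lean document; each statement's English description precedes it below -/
import Mathlib

section
/- Let C be a Noetherian commutative ring, A and B commutative C-algebras, M an A-module, and R = A ⊗_C B. If A and M are flat as C-modules, then Tor^R_i(M ⊗_A R, N ⊗_B R) = 0 for every B-module N and every integer i > 0. -/
/-!
Base change `R ⊗_B -` preserves projectives, and it is exact because `R = A ⊗_C B` is `B`-flat
(`A` being `C`-flat), so it carries a projective resolution `Q` of `N` to one of `R ⊗_B N`. Hence
`Tor^R_i(X, R ⊗_B N) = H_i(X ⊗_R (R ⊗_B Q)) = H_i(X ⊗_B Q)` for `X = R ⊗_A M`, and this vanishes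
for `i > 0` because `X ≅ B ⊗_C M` is `B`-flat.
-/

open scoped TensorProduct

open CategoryTheory

attribute [local instance] Algebra.TensorProduct.rightAlgebra

noncomputable section

universe u

open Limits in
theorem CategoryTheory.Functor.isZero_leftDerived_obj_succ_of_preservesHomology_comp
    {C D E : Type*} [Category C] [Abelian C] [HasProjectiveResolutions C]
    [Category D] [Abelian D] [HasProjectiveResolutions D] [Category E] [Abelian E]
    (F : C ⥤ D) [F.Additive] [F.PreservesProjectiveObjects] [F.PreservesHomology]
    (T : D ⥤ E) [T.Additive] [(F ⋙ T).PreservesHomology] (X : C) (n : ℕ) :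
    IsZero ((T.leftDerived (n + 1)).obj (F.obj X)) := by
  let P := F.mapProjectiveResolution (projectiveResolution X)
  refine IsZero.of_iso ?_ (P.isoLeftDerivedObj T (n + 1))
  refine (HomologicalComplex.exactAt_iff_isZero_homology _ _).mp ?_
  exact ((projectiveResolution X).complex_exactAt_succ n).map (F ⋙ T)

def ModuleCat.baseChange (B S : Type u) [CommRing B] [CommRing S] [Algebra B S] :
    ModuleCat.{u} B ⥤ ModuleCat.{u} S where
  obj Q := ModuleCat.of S (S ⊗[B] Q)
  map l := ModuleCat.ofHom (l.hom.baseChange S)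
  map_id _ := by ext : 1; exact LinearMap.baseChange_id
  map_comp _ _ := by ext : 1; exact LinearMap.baseChange_comp _ _

namespace ModuleCat.baseChange

variable (B S : Type u) [CommRing B] [CommRing S] [Algebra B S]

instance : (baseChange B S).Additive where
  map_add {_ _ f g} := by ext : 1; exact LinearMap.baseChange_add f.hom g.hom

instance : (baseChange B S).PreservesProjectiveObjects where
  projective_obj {Q} hQ := by
    rw [← IsProjective.iff_projective] at hQ ⊢
    change Module.Projective S (S ⊗[B] Q)
    infer_instance

instance [Module.Flat B S] : (baseChange B S).PreservesHomology := by
  refine ((Functor.exact_tfae _).out 1 2).mp fun T hT => ?_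
  rw [ShortComplex.ShortExact.moduleCat_exact_iff_function_exact] at hT ⊢
  exact Module.Flat.lTensor_exact S hT

/-- `X ⊗_S (S ⊗_B -) ≅ X ⊗_B -`, which is exact when `X` is `B`-flat. -/
instance (X : Type u) [AddCommGroup X] [Module S X] [Module B X] [IsScalarTower B S X]
    [Module.Flat B X] :
    (baseChange B S ⋙
      (MonoidalCategory.tensoringLeft _).obj (ModuleCat.of S X)).PreservesHomology := by
  refine ((Functor.exact_tfae _).out 1 2).mp fun T hT => ?_
  rw [ShortComplex.ShortExact.moduleCat_exact_iff_function_exact] at hT ⊢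
  exact (Function.Exact.iff_of_ladder_linearEquiv
    (TensorProduct.AlgebraTensorModule.lTensor_comp_cancelBaseChange B S S (M := X) T.f.hom)
    (TensorProduct.AlgebraTensorModule.lTensor_comp_cancelBaseChange B S S (M := X) T.g.hom)).mp
    (Module.Flat.lTensor_exact (R := B) X hT)

end ModuleCat.baseChange

theorem tor_baseChange_vanishing_general
    (C : Type u) [CommRing C]
    (A : Type u) [CommRing A] [Algebra C A]
    (B : Type u) [CommRing B] [Algebra C B]
    (M : Type u) [AddCommGroup M] [Module C M] [Module A M] [IsScalarTower C A M]
    (hA : Module.Flat C A) (hM : Module.Flat C M)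
    (N : Type u) [AddCommGroup N] [Module B N]
    (i : ℕ) (hi : 0 < i) :
    Limits.IsZero
      (((Tor (ModuleCat.{u} (A ⊗[C] B)) i).obj
          (ModuleCat.of (A ⊗[C] B) ((A ⊗[C] B) ⊗[A] M))).obj
        (ModuleCat.of (A ⊗[C] B) ((A ⊗[C] B) ⊗[B] N))) := by
  have : Module.Flat B (A ⊗[C] B) :=
    Module.Flat.isBaseChange C B A (A ⊗[C] B) Algebra.IsPushout.out
  have : Module.Flat B ((A ⊗[C] B) ⊗[A] M) :=
    Module.Flat.of_linearEquiv (Algebra.IsPushout.cancelBaseChange C B A (A ⊗[C] B) M)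
  obtain ⟨n, rfl⟩ := Nat.exists_eq_add_one_of_ne_zero hi.ne'
  exact (ModuleCat.baseChange B (A ⊗[C] B)).isZero_leftDerived_obj_succ_of_preservesHomology_comp
    _ (ModuleCat.of B N) n

/-- Let `C` be Noetherian, `A`, `B` commutative `C`-algebras,
`M` an `A`-module and `R = A ⊗_C B`.  If `A` and `M` are flat over `C`, then
`Tor^R_i(M ⊗_A R, N ⊗_B R) = 0` for every `B`-module `N` and every `i > 0`. -/
theorem tor_baseChange_vanishing
    (C : Type u) [CommRing C] [IsNoetherianRing C]
    (A : Type u) [CommRing A] [Algebra C A]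
    (B : Type u) [CommRing B] [Algebra C B]
    (M : Type u) [AddCommGroup M] [Module C M] [Module A M] [IsScalarTower C A M]
    (hA : Module.Flat C A) (hM : Module.Flat C M)
    (N : Type u) [AddCommGroup N] [Module C N] [Module B N] [IsScalarTower C B N]
    (i : ℕ) (hi : 0 < i) :
    Limits.IsZero
      (((Tor (ModuleCat.{u} (A ⊗[C] B)) i).obj
          (ModuleCat.of (A ⊗[C] B) ((A ⊗[C] B) ⊗[A] M))).obj
        (ModuleCat.of (A ⊗[C] B) ((A ⊗[C] B) ⊗[B] N))) :=
  tor_baseChange_vanishing_general C A B M hA hM N i hi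
end
end

section
/- Let C be a Noetherian commutative ring, A and B commutative C-algebras, L an A-module, and R = A ⊗_C B. Suppose that A and A/tr_A(L) are flat as C-modules. Then for every finitely generated B-module N one has tr_A(L)R ∩ tr_B(N)R = (tr_A(L)R)·(tr_B(N)R), where tr_A(L)R and tr_B(N)R denote the extensions of the ideals tr_A(L) ⊆ A and tr_B(N) ⊆ B to R along the canonical maps A → R and B → R. -/
open scoped TensorProduct

attribute [local instance] Algebra.TensorProduct.rightAlgebra

noncomputable section

/-- The trace ideal of an `R`-module `M`: the sum of the images of all
`R`-linear maps `M → R`. -/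
def traceIdeal (R : Type*) [CommRing R] (M : Type*) [AddCommGroup M] [Module R M] :
    Ideal R :=
  ⨆ f : M →ₗ[R] R, LinearMap.range f

/-!
For ideals `I ⊆ A`, `J ⊆ B` and `R = A ⊗_C B`, an element of `IR` is the image of some
`y ∈ I ⊗_C B`, and it lies in `JR` exactly when it vanishes in `A ⊗_C B/J`. If `A/I` is flat
over `C`, then `Tor₁^C(A/I, B/J) = 0`, so `I ⊗_C B/J → A ⊗_C B/J` is injective; hence `y`
already vanishes in `I ⊗_C B/J`, i.e. it comes from `I ⊗_C J`, whose image lies in `IR · JR`.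
-/

namespace Ideal

open Algebra.TensorProduct LinearMap

variable {C A B : Type*} [CommRing C] [CommRing A] [CommRing B] [Algebra C A] [Algebra C B]

lemma exact_subtype_quotientMkₐ (I : Ideal A) :
    Function.Exact (I.restrictScalars C).subtype (Quotient.mkₐ C I).toLinearMap := fun x ↦ by
  simp [Quotient.eq_zero_iff_mem]

lemma rTensor_subtype_injective_of_flat_quotient (I : Ideal A) [Module.Flat C (A ⧸ I)]
    (M : Type*) [AddCommGroup M] [Module C M] :
    Function.Injective ((I.restrictScalars C).subtype.rTensor M) :=
  (lTensor_inj_iff_rTensor_inj M _).mp <|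
    lTensor_injective_of_exact_of_flat _ (Quotient.mkₐ_surjective C I) _
      (Submodule.injective_subtype _) (exact_subtype_quotientMkₐ I) M

lemma range_map_subtype_le_map_mul_map (I : Ideal A) (J : Ideal B) :
    range (TensorProduct.map (I.restrictScalars C).subtype (J.restrictScalars C).subtype) ≤
      (I.map (algebraMap A (A ⊗[C] B)) * J.map (algebraMap B (A ⊗[C] B))).restrictScalars C := by
  rintro _ ⟨z, rfl⟩
  induction z with
  | zero => simp
  | tmul i j =>
    rw [TensorProduct.map_tmul, Submodule.subtype_apply, Submodule.subtype_apply,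
      ← mul_one (i : A), ← one_mul (j : B), ← tmul_mul_tmul]
    exact mul_mem_mul (mem_map_of_mem _ i.2) (mem_map_of_mem _ j.2)
  | add u v hu hv => rw [map_add]; exact add_mem hu hv

theorem map_inf_map_eq_mul_of_flat (I : Ideal A) (J : Ideal B) [Module.Flat C (A ⧸ I)] :
    I.map (algebraMap A (A ⊗[C] B)) ⊓ J.map (algebraMap B (A ⊗[C] B)) =
      I.map (algebraMap A (A ⊗[C] B)) * J.map (algebraMap B (A ⊗[C] B)) := by
  refine le_antisymm (fun x ⟨hxI, hxJ⟩ ↦ ?_) mul_le_inf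
  let ι := (I.restrictScalars C).subtype
  let π := (Quotient.mkₐ C J).toLinearMap
  obtain ⟨y, rfl⟩ := (I.map_includeLeft_eq (R := C) (B := B)).le hxI
  have hx_vanishes : π.lTensor A (ι.rTensor B y) = 0 := by
    change Algebra.TensorProduct.map (AlgHom.id C A) (Quotient.mkₐ C J) _ = 0
    rwa [← RingHom.mem_ker, lTensor_ker _ (Quotient.mkₐ_surjective C J),
      ← RingHom.ker_coe_toRingHom, Quotient.mkₐ_ker]
  have hy_vanishes : π.lTensor _ y = 0 := by
    apply rTensor_subtype_injective_of_flat_quotient I (B ⧸ J)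
    rw [map_zero, ← comp_apply, rTensor_comp_lTensor, ← lTensor_comp_rTensor, comp_apply,
      hx_vanishes]
  obtain ⟨z, rfl⟩ := (lTensor_exact _ (exact_subtype_quotientMkₐ J)
    (Quotient.mkₐ_surjective C J) y).mp hy_vanishes
  rw [← comp_apply, rTensor_comp_lTensor]
  exact range_map_subtype_le_map_mul_map I J ⟨z, rfl⟩

end Ideal

theorem traceIdeal_inf_eq_mul_general
    (C : Type*) [CommRing C]
    (A : Type*) [CommRing A] [Algebra C A]
    (B : Type*) [CommRing B] [Algebra C B]
    (L : Type*) [AddCommGroup L] [Module A L]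
    (hq : Module.Flat C (A ⧸ traceIdeal A L))
    (N : Type*) [AddCommGroup N] [Module B N] :
    (traceIdeal A L).map (algebraMap A (A ⊗[C] B)) ⊓
        (traceIdeal B N).map (algebraMap B (A ⊗[C] B)) =
      (traceIdeal A L).map (algebraMap A (A ⊗[C] B)) *
        (traceIdeal B N).map (algebraMap B (A ⊗[C] B)) := by
  have := hq
  exact Ideal.map_inf_map_eq_mul_of_flat _ _

/-- Let `C` be Noetherian, `A`, `B` commutative `C`-algebras,
`L` an `A`-module and `R = A ⊗_C B`.  If `A` and `A/tr_A(L)` are flat over `C`,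
then `tr_A(L)R ∩ tr_B(N)R = (tr_A(L)R)·(tr_B(N)R)` for every finitely
generated `B`-module `N`. -/
theorem traceIdeal_inf_eq_mul
    (C : Type*) [CommRing C] [IsNoetherianRing C]
    (A : Type*) [CommRing A] [Algebra C A]
    (B : Type*) [CommRing B] [Algebra C B]
    (L : Type*) [AddCommGroup L] [Module A L]
    (hA : Module.Flat C A) (hq : Module.Flat C (A ⧸ traceIdeal A L))
    (N : Type*) [AddCommGroup N] [Module B N] [Module.Finite B N] :
    (traceIdeal A L).map (algebraMap A (A ⊗[C] B)) ⊓
        (traceIdeal B N).map (algebraMap B (A ⊗[C] B)) =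
      (traceIdeal A L).map (algebraMap A (A ⊗[C] B)) *
        (traceIdeal B N).map (algebraMap B (A ⊗[C] B)) :=
  traceIdeal_inf_eq_mul_general C A B L hq N

end
end

section
/- Let m, n be positive integers and δ = [c_1,…,c_r|d_1,…,d_r] ∈ Δ(m,n). For every 1 ≤ i ≤ t there exists an integer N_i with 1 ≤ N_i ≤ r such that: (1) whenever [e_1,…,e_s|f_1,…,f_s] ∈ Δ(m,n) satisfies [e_1,…,e_s|f_1,…,f_s] ≥ δ and [e_1,…,e_s|f_1,…,f_s] ≱ τ_i, then s ≥ N_i; and (2) for every s with N_i ≤ s ≤ r, the minor [c_1,…,c_s|d_1,…,d_s] satisfies [c_1,…,c_s|d_1,…,d_s] ≥ δ and [c_1,…,c_s|d_1,…,d_s] ≱ τ_i. -/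
open scoped BigOperators TensorProduct

set_option maxHeartbeats 1000000
set_option synthInstance.maxHeartbeats 400000

noncomputable section

/-- `Γ(m,N)`: strictly increasing `m`-tuples with entries in `{1,…,N}`,
encoded as functions `Fin m → ℕ` and ordered componentwise. -/
def GammaSet (m N : ℕ) : Set (Fin m → ℕ) :=
  {a | StrictMono a ∧ ∀ i, 1 ≤ a i ∧ a i ≤ N}

/-- Extended entries of a tuple `a ∈ Γ(m,N)`: `aext j = a_j` for `1 ≤ j ≤ m`
(1-based indexing) and `aext (m+1) = N+1`. -/
def aext (m N : ℕ) (a : Fin m → ℕ) (j : ℕ) : ℕ :=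
  if h : j - 1 < m then a ⟨j - 1, h⟩ else N + 1

/-- Block data for `γ ∈ Γ(m,N)`: `k 0 = 0`, `k` is strictly increasing on
`{0,…,t+1}` and `k 1 < ⋯ < k (t+1)` lists exactly the indices `j ∈ {1,…,m}`
with `a_{j+1} - a_j > 1` (where `a_{m+1} = N+1`). -/
def IsBlockData (m N : ℕ) (a : Fin m → ℕ) (t : ℕ) (k : ℕ → ℕ) : Prop :=
  k 0 = 0 ∧ (∀ i j, i < j → j ≤ t + 1 → k i < k j) ∧
    ∀ j, (∃ i, 1 ≤ i ∧ i ≤ t + 1 ∧ k i = j) ↔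
      (1 ≤ j ∧ j ≤ m ∧ 1 < aext m N a (j + 1) - aext m N a j)

/-- `ζ_i`: the tuple `γ` with the entry `a_{k(i+1)}` replaced by `a_{k(i+1)} + 1`. -/
def zetaT (m : ℕ) (a : Fin m → ℕ) (k : ℕ → ℕ) (i : ℕ) : Fin m → ℕ :=
  fun j => if (j : ℕ) + 1 = k (i + 1) then a j + 1 else a j

/-- `σ_i`: the strictly increasing tuple whose entry set is
`({a_1,…,a_m} ∖ {a_{k(i)}}) ∪ {a_{k(i+1)} + 1}`. -/
def sigmaT (m N : ℕ) (a : Fin m → ℕ) (k : ℕ → ℕ) (i : ℕ) : Fin m → ℕ :=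
  fun j =>
    if (j : ℕ) + 1 < k i then a j
    else if (j : ℕ) + 1 < k (i + 1) then aext m N a ((j : ℕ) + 2)
    else if (j : ℕ) + 1 = k (i + 1) then a j + 1
    else a j

/-- `κ_i = Σ_{j=0}^{i} (k(j+1) − k(j)) + Σ_{j=i}^{t} (a_{k(j+1)+1} − a_{k(j+1)} − 1)`. -/
def kappaT (m N : ℕ) (a : Fin m → ℕ) (t : ℕ) (k : ℕ → ℕ) (i : ℕ) : ℕ :=
  (∑ j ∈ Finset.range (i + 1), (k (j + 1) - k j)) +
    ∑ j ∈ Finset.Icc i t, (aext m N a (k (j + 1) + 1) - aext m N a (k (j + 1)) - 1)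

/-- `κ = max_{0 ≤ i ≤ t} κ_i`. -/
def kappaMax (m N : ℕ) (a : Fin m → ℕ) (t : ℕ) (k : ℕ → ℕ) : ℕ :=
  (Finset.range (t + 1)).sup (kappaT m N a t k)

/-- `κ' = min_{0 ≤ i ≤ t} κ_i`. -/
def kappaMin (m N : ℕ) (a : Fin m → ℕ) (t : ℕ) (k : ℕ → ℕ) : ℕ :=
  (Finset.range (t + 1)).inf' (Finset.nonempty_range_iff.mpr (Nat.succ_ne_zero t))
    (kappaT m N a t k)

/-- `i ∈ S_h`, i.e. `κ − κ_i ≥ h`. -/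
def memS (m N : ℕ) (a : Fin m → ℕ) (t : ℕ) (k : ℕ → ℕ) (h i : ℕ) : Prop :=
  h ≤ kappaMax m N a t k - kappaT m N a t k i

/-- `i ∈ U_h`: `1 ≤ i ≤ t` and exactly one of `i-1`, `i` belongs to `S_h`. -/
def memU (m N : ℕ) (a : Fin m → ℕ) (t : ℕ) (k : ℕ → ℕ) (h i : ℕ) : Prop :=
  1 ≤ i ∧ i ≤ t ∧ ¬ (memS m N a t k h i ↔ memS m N a t k h (i - 1))

/-- The maximal minor `[a]` of the generic `m × n` matrix `(X_{uv})`
(rows `1,…,m`, columns `a_1,…,a_m`), inside `B[X_{ij} : i,j ≥ 1]`. -/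
def minor (B : Type*) [CommRing B] (m : ℕ) (a : Fin m → ℕ) : MvPolynomial (ℕ × ℕ) B :=
  (Matrix.of fun u v : Fin m => MvPolynomial.X ((u : ℕ) + 1, a v)).det

/-- `G_B(X)`: the `B`-subalgebra generated by all maximal minors `[a]`, `a ∈ Γ(m,n)`. -/
def schubertAlgebra (B : Type*) [CommRing B] (m n : ℕ) :
    Subalgebra B (MvPolynomial (ℕ × ℕ) B) :=
  Algebra.adjoin B ((fun a => minor B m a) '' GammaSet m n)

lemma minor_mem (B : Type*) [CommRing B] (m n : ℕ) {a : Fin m → ℕ}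
    (ha : a ∈ GammaSet m n) : minor B m a ∈ schubertAlgebra B m n :=
  Algebra.subset_adjoin ⟨a, ha, rfl⟩

/-- `J_B(X; γ)`: the ideal of `G_B(X)` generated by all `[δ]` with `δ ≱ γ`. -/
def JIdeal (B : Type*) [CommRing B] (m n : ℕ) (γ : Fin m → ℕ) :
    Ideal (schubertAlgebra B m n) :=
  Ideal.span {x | ∃ a ∈ GammaSet m n, ¬ γ ≤ a ∧
    (x : MvPolynomial (ℕ × ℕ) B) = minor B m a}

/-- The Schubert cycle `G_B(X; γ) = G_B(X)/J_B(X;γ)`. -/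
abbrev SchubertCycle (B : Type*) [CommRing B] (m n : ℕ) (γ : Fin m → ℕ) :=
  schubertAlgebra B m n ⧸ JIdeal B m n γ

/-- `J_B(x; δ) = J_B(X;δ)/J_B(X;γ)`, an ideal of `G_B(X;γ)`. -/
def JxIdeal (B : Type*) [CommRing B] (m n : ℕ) (γ δ : Fin m → ℕ) :
    Ideal (SchubertCycle B m n γ) :=
  (JIdeal B m n δ).map (Ideal.Quotient.mk (JIdeal B m n γ))

end
noncomputable section
/-- An element of (the ambient type of) `Δ(m,n)`: a size `r` together with row
and column index tuples. -/
abbrev DeltaTuple : Type := Σ r : ℕ, (Fin r → ℕ) × (Fin r → ℕ)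

/-- `Δ(m,n)`: the minors `[a_1,…,a_r | b_1,…,b_r]` with
`1 ≤ r ≤ min m n`, `1 ≤ a_1 < ⋯ < a_r ≤ m` and `1 ≤ b_1 < ⋯ < b_r ≤ n`. -/
def DeltaSet (m n : ℕ) : Set DeltaTuple :=
  {x | 1 ≤ x.1 ∧ x.1 ≤ min m n ∧ StrictMono x.2.1 ∧ StrictMono x.2.2 ∧
    (∀ i, 1 ≤ x.2.1 i ∧ x.2.1 i ≤ m) ∧ (∀ i, 1 ≤ x.2.2 i ∧ x.2.2 i ≤ n)}

/-- The partial order on `Δ(m,n)`: `x ≤ y` iff `y.r ≤ x.r` and the first `y.r`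
rows/columns of `x` are componentwise `≤` those of `y`. -/
def deltaLE (x y : DeltaTuple) : Prop :=
  ∃ h : y.1 ≤ x.1, ∀ i : Fin y.1,
    x.2.1 (Fin.castLE h i) ≤ y.2.1 i ∧ x.2.2 (Fin.castLE h i) ≤ y.2.2 i

/-- The `r`-minor `det (X_{a_u, b_v})` of the generic `m × n` matrix, inside
the polynomial ring `B[X_{ij} : 1 ≤ i ≤ m, 1 ≤ j ≤ n]` (variables indexed by
`Fin m × Fin n`, with 1-based row/column labels). -/
def dminor (B : Type*) [CommRing B] (m n : ℕ) (x : DeltaTuple) :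
    MvPolynomial (Fin m × Fin n) B :=
  (Matrix.of fun u v : Fin x.1 =>
    if h : x.2.1 u - 1 < m ∧ x.2.2 v - 1 < n then
      MvPolynomial.X (⟨x.2.1 u - 1, h.1⟩, ⟨x.2.2 v - 1, h.2⟩)
    else 0).det

/-- `I_B(X;δ)`: the ideal of `B[X]` generated by all minors `θ ∈ Δ(m,n)` with `θ ≱ δ`. -/
def IIdeal (B : Type*) [CommRing B] (m n : ℕ) (δ : DeltaTuple) :
    Ideal (MvPolynomial (Fin m × Fin n) B) :=
  Ideal.span {p | ∃ θ ∈ DeltaSet m n, ¬ deltaLE δ θ ∧ p = dminor B m n θ}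

/-- The determinantal ring `R_B(X;δ) = B[X]/I_B(X;δ)`. -/
abbrev DetRing (B : Type*) [CommRing B] (m n : ℕ) (δ : DeltaTuple) :=
  MvPolynomial (Fin m × Fin n) B ⧸ IIdeal B m n δ

/-- `I_B(x;γ) = I_B(X;γ)/I_B(X;δ)`, an ideal of `R_B(X;δ)`. -/
def IxIdeal (B : Type*) [CommRing B] (m n : ℕ) (δ γ : DeltaTuple) :
    Ideal (DetRing B m n δ) :=
  (IIdeal B m n γ).map (Ideal.Quotient.mk (IIdeal B m n δ))

/-- The correspondence `δ = [c|d] ↦ δ̃ ∈ Γ(m, m+n)`: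
`δ̃ = (d_1,…,d_r, m+n+1−e_{m−r},…,m+n+1−e_1)` where `e_1 < ⋯ < e_{m−r}`
enumerate `{1,…,m} ∖ {c_1,…,c_r}`. -/
def tildeT (m n : ℕ) (x : DeltaTuple) : Fin m → ℕ := fun j =>
  if h : (j : ℕ) < x.1 then x.2.2 ⟨j, h⟩
  else m + n + 1 -
    ((Finset.Icc 1 m \ Finset.image x.2.1 Finset.univ).sort (· ≤ ·)).getD
      (m - 1 - (j : ℕ)) 0

/-- The inverse correspondence `φ : Γ(m,m+n) ∖ {(n+1,…,n+m)} → Δ(m,n)`: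
`φ(b) = [a_1,…,a_s | b_1,…,b_s]` where `s = #{j : b_j ≤ n}` and `a_1 < ⋯ < a_s`
enumerate `{1,…,m} ∖ {m+n+1−b_j : b_j > n}`. -/
def phiT (m n : ℕ) (b : Fin m → ℕ) : DeltaTuple :=
  ⟨((Finset.univ.filter fun j : Fin m => b j ≤ n).image fun j => b j).card,
   fun i => ((Finset.Icc 1 m \
      ((Finset.univ.filter fun j : Fin m => n < b j).image fun j => m + n + 1 - b j)).sort
        (· ≤ ·)).getD i 0,
   fun i => (((Finset.univ.filter fun j : Fin m => b j ≤ n).image fun j => b j).sort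
        (· ≤ ·)).getD i 0⟩

end

/-!
The heart of the matter is that `δ ≱ τ_i`. Indeed `δ̃ < σ_i` componentwise. If
`τ_i = φ(σ_i) ≤ δ`, then `τ_i` has at least `r` rows, which forces the entries `≤ n` of `σ_i`
into its first `r` positions; the column sums of `τ_i` and the sums of the rows it omits are then
bounded by those of `δ`, i.e. by the corresponding sums over `δ̃`, and this is only possible if
`σ_i = δ̃`.

Since the truncations `[c_1,…,c_s|d_1,…,d_s]` decrease as `s` grows, `N_i` can be taken to be
the least `s` at which the truncation is `≱ τ_i`; a `θ ≥ δ` of size `s` lies above the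
truncation of size `s`, which gives (1).
-/

def truncation (δ : DeltaTuple) (s : ℕ) (hs : s ≤ δ.1) : DeltaTuple :=
  ⟨s, fun j => δ.2.1 (Fin.castLE hs j), fun j => δ.2.2 (Fin.castLE hs j)⟩

theorem deltaLE_trans {x y z : DeltaTuple} (hxy : deltaLE x y) (hyz : deltaLE y z) :
    deltaLE x z := by
  obtain ⟨hyx, hxy⟩ := hxy
  obtain ⟨hzy, hyz⟩ := hyz
  exact ⟨hzy.trans hyx, fun p =>
    ⟨(hxy _).1.trans (hyz p).1, (hxy _).2.trans (hyz p).2⟩⟩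

theorem deltaLE_truncation (δ : DeltaTuple) {s : ℕ} (hs : s ≤ δ.1) :
    deltaLE δ (truncation δ s hs) :=
  ⟨hs, fun _ => ⟨le_rfl, le_rfl⟩⟩

theorem truncation_deltaLE_truncation (δ : DeltaTuple) {s s' : ℕ} (hs : s ≤ δ.1)
    (hs' : s' ≤ δ.1) (hss' : s ≤ s') :
    deltaLE (truncation δ s' hs') (truncation δ s hs) :=
  ⟨hss', fun _ => ⟨le_rfl, le_rfl⟩⟩

theorem truncation_deltaLE {δ θ : DeltaTuple} (h : θ.1 ≤ δ.1) (hδθ : deltaLE δ θ) :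
    deltaLE (truncation δ θ.1 h) θ :=
  ⟨le_rfl, fun p => hδθ.2 p⟩

theorem deltaLE_truncation_zero (τ δ : DeltaTuple) :
    deltaLE τ (truncation δ 0 (Nat.zero_le _)) :=
  ⟨Nat.zero_le _, fun p => p.elim0⟩

theorem exists_size_bound_of_not_deltaLE {τ δ : DeltaTuple} (h : ¬ deltaLE τ δ) :
    ∃ N, 1 ≤ N ∧ N ≤ δ.1 ∧ (∀ θ, deltaLE δ θ → ¬ deltaLE τ θ → N ≤ θ.1) ∧
      ∀ s, N ≤ s → ∀ hs : s ≤ δ.1,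
        deltaLE δ (truncation δ s hs) ∧ ¬ deltaLE τ (truncation δ s hs) := by
  classical
  have hex : ∃ s, ∃ hs : s ≤ δ.1, ¬ deltaLE τ (truncation δ s hs) := ⟨δ.1, le_rfl, h⟩
  obtain ⟨hNδ, hN⟩ := Nat.find_spec hex
  refine ⟨Nat.find hex, ?_, hNδ, ?_, fun s hNs hs => ⟨deltaLE_truncation δ hs, ?_⟩⟩
  · refine Nat.one_le_iff_ne_zero.2 fun h0 => ?_
    obtain ⟨_, h0⟩ := (Nat.find_eq_zero hex).1 h0
    exact h0 (deltaLE_truncation_zero τ δ)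
  · intro θ hδθ hτθ
    by_contra! hθN
    refine Nat.find_min hex hθN ⟨hδθ.1, fun hτ => hτθ ?_⟩
    exact deltaLE_trans hτ (truncation_deltaLE hδθ.1 hδθ)
  · exact fun hτ => hN (deltaLE_trans hτ (truncation_deltaLE_truncation δ _ hs hNs))

section BlockData

variable {m N t : ℕ} {a : Fin m → ℕ} {k : ℕ → ℕ}

theorem aext_add_one (a : Fin m → ℕ) (j : Fin m) : aext m N a (j + 1) = a j := by
  simp [aext]

theorem aext_add_one_lt (ha : a ∈ GammaSet m N) {j j' : ℕ} (hjj' : j < j') (hj' : j' ≤ m) :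
    aext m N a (j + 1) < aext m N a (j' + 1) := by
  have hj : aext m N a (j + 1) = a ⟨j, by omega⟩ := aext_add_one a ⟨j, by omega⟩
  rcases hj'.lt_or_eq with hj' | rfl
  · rw [hj, aext_add_one a ⟨j', hj'⟩]
    exact ha.1 (show (⟨j, _⟩ : Fin m) < ⟨j', hj'⟩ from hjj')
  · rw [hj, aext, dif_neg (by omega)]
    exact Nat.lt_succ_of_le (ha.2 _).2

theorem aext_add_one_le (ha : a ∈ GammaSet m N) {j : ℕ} (hj : j < m) :
    aext m N a (j + 1) ≤ N := by
  rw [aext_add_one a ⟨j, hj⟩]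
  exact (ha.2 _).2

theorem aext_le_add_one (ha : a ∈ GammaSet m N) (j : ℕ) : aext m N a j ≤ N + 1 := by
  unfold aext
  split_ifs
  exacts [(ha.2 _).2.trans N.le_succ, le_rfl]

theorem IsBlockData.lt_succ (hbd : IsBlockData m N a t k) {i : ℕ} (hit : i ≤ t) :
    k i < k (i + 1) :=
  hbd.2.1 i (i + 1) (Nat.lt_succ_self i) (by omega)

theorem IsBlockData.succ_mem_Icc (hbd : IsBlockData m N a t k) {i : ℕ} (hit : i ≤ t) :
    1 ≤ k (i + 1) ∧ k (i + 1) ≤ m :=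
  ((hbd.2.2 (k (i + 1))).1 ⟨i + 1, by omega, by omega, rfl⟩).imp_right And.left

theorem IsBlockData.aext_add_one_lt (hbd : IsBlockData m N a t k) {i x : ℕ} (hit : i ≤ t)
    (hx : x + 1 = k (i + 1)) : aext m N a (x + 1) + 1 < aext m N a (x + 1 + 1) := by
  have := ((hbd.2.2 (x + 1)).1 ⟨i + 1, by omega, by omega, hx.symm⟩).2.2
  omega

theorem sigmaT_apply (i : ℕ) (j : Fin m) :
    sigmaT m N a k i j =
      if (j : ℕ) + 1 < k i then aext m N a (j + 1)
      else if (j : ℕ) + 1 < k (i + 1) then aext m N a (j + 1 + 1)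
      else if (j : ℕ) + 1 = k (i + 1) then aext m N a (j + 1) + 1
      else aext m N a (j + 1) := by
  simp only [sigmaT, aext_add_one]

variable (ha : a ∈ GammaSet m N) (hbd : IsBlockData m N a t k) {i : ℕ} (hit : i ≤ t)
include ha hbd hit

theorem le_sigmaT_apply_le (j : Fin m) :
    a j ≤ sigmaT m N a k i j ∧ sigmaT m N a k i j ≤ N := by
  have hlt := aext_add_one_lt ha (j := j) (j' := j + 1) (by omega) j.2
  have hgap := imp_iff_not_or.1 fun hx => hbd.aext_add_one_lt (x := j) hit hx
  have hN := aext_add_one_le ha j.2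
  have hN' := imp_iff_not_or.1 fun h : (j : ℕ) + 1 < m => aext_add_one_le ha (j := j + 1) h
  have := hbd.succ_mem_Icc hit
  have := aext_le_add_one ha (j + 1 + 1)
  rw [sigmaT_apply, ← aext_add_one (N := N) a j]
  split_ifs <;> omega

theorem strictMono_sigmaT : StrictMono (sigmaT m N a k i) := by
  obtain ⟨m, rfl⟩ : ∃ m', m = m' + 1 := ⟨m - 1, by have := hbd.succ_mem_Icc hit; omega⟩
  refine Fin.strictMono_iff_lt_succ.2 fun j => ?_
  have h01 := aext_add_one_lt ha (j := j) (j' := j + 1) (by omega) (by omega)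
  have h12 := aext_add_one_lt ha (j := j + 1) (j' := j + 1 + 1) (by omega) (by omega)
  have hgap0 := imp_iff_not_or.1 fun hx => hbd.aext_add_one_lt (x := j) hit hx
  have hgap1 := imp_iff_not_or.1 fun hx => hbd.aext_add_one_lt (x := j + 1) hit hx
  have := hbd.lt_succ hit
  rw [sigmaT_apply, sigmaT_apply]
  simp only [Fin.val_castSucc, Fin.val_succ]
  split_ifs <;> omega

theorem sigmaT_mem_gammaSet : sigmaT m N a k i ∈ GammaSet m N :=
  ⟨strictMono_sigmaT ha hbd hit, fun j =>
    ⟨(ha.2 j).1.trans (le_sigmaT_apply_le ha hbd hit j).1,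
      (le_sigmaT_apply_le ha hbd hit j).2⟩⟩

theorem lt_sigmaT : a < sigmaT m N a k i := by
  obtain ⟨h1, hm⟩ := hbd.succ_mem_Icc hit
  refine Pi.lt_def.2 ⟨fun j => (le_sigmaT_apply_le ha hbd hit j).1,
    ⟨k (i + 1) - 1, by omega⟩, ?_⟩
  have := hbd.lt_succ hit
  rw [sigmaT_apply, ← aext_add_one (N := N) a]
  simp only
  split_ifs <;> omega

end BlockData

section Correspondence

open Finset

/-- The set `{e_1 < ⋯ < e_{m-r}}` in the definition of `δ̃`. -/
def omittedRows (m : ℕ) (δ : DeltaTuple) : Finset ℕ :=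
  Icc 1 m \ image δ.2.1 univ

variable {m n : ℕ} {δ : DeltaTuple}

theorem fst_le_of_mem_deltaSet (hδ : δ ∈ DeltaSet m n) : δ.1 ≤ m :=
  hδ.2.1.trans (min_le_left _ _)

theorem image_rows_subset_Icc (hδ : δ ∈ DeltaSet m n) : image δ.2.1 univ ⊆ Icc 1 m := by
  intro x hx
  obtain ⟨i, -, rfl⟩ := mem_image.1 hx
  exact mem_Icc.2 (hδ.2.2.2.2.1 i)

theorem card_omittedRows (hδ : δ ∈ DeltaSet m n) : #(omittedRows m δ) = m - δ.1 := by
  rw [omittedRows, card_sdiff_of_subset (image_rows_subset_Icc hδ), Nat.card_Icc,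
    card_image_of_injective _ hδ.2.2.1.injective, card_univ, Fintype.card_fin,
    Nat.add_sub_cancel]

theorem mem_Icc_of_mem_omittedRows {x : ℕ} (hx : x ∈ omittedRows m δ) : x ∈ Icc 1 m :=
  (mem_sdiff.1 hx).1

theorem tildeT_of_lt (j : Fin m) (hj : (j : ℕ) < δ.1) : tildeT m n δ j = δ.2.2 ⟨j, hj⟩ :=
  dif_pos hj

variable (hδ : δ ∈ DeltaSet m n)
include hδ

theorem tildeT_of_le (j : Fin m) (hj : δ.1 ≤ j) :
    tildeT m n δ j = m + n + 1 -
      (omittedRows m δ).orderEmbOfFin (card_omittedRows hδ) ⟨m - 1 - j, by omega⟩ := by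
  rw [tildeT, dif_neg (by omega), List.getD_eq_getElem, orderEmbOfFin_apply]
  rfl

theorem tildeT_le_iff (j : Fin m) : tildeT m n δ j ≤ n ↔ (j : ℕ) < δ.1 := by
  refine ⟨fun h => ?_, fun h => tildeT_of_lt j h ▸ (hδ.2.2.2.2.2 _).2⟩
  by_contra! hj
  have := mem_Icc.1 (mem_Icc_of_mem_omittedRows (orderEmbOfFin_mem _ (card_omittedRows hδ)
    ⟨m - 1 - j, by omega⟩))
  rw [tildeT_of_le hδ j hj] at h
  omega

theorem tildeT_mem_gammaSet : tildeT m n δ ∈ GammaSet m (m + n) := by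
  have hbig := fun q => mem_Icc.1 (mem_Icc_of_mem_omittedRows
    (orderEmbOfFin_mem _ (card_omittedRows hδ) q))
  refine ⟨fun j₁ j₂ h => ?_, fun j => ?_⟩
  · have h' : (j₁ : ℕ) < j₂ := h
    by_cases h₂ : (j₂ : ℕ) < δ.1
    · rw [tildeT_of_lt j₁ (h'.trans h₂), tildeT_of_lt j₂ h₂]
      exact hδ.2.2.2.1 (show (⟨j₁, _⟩ : Fin δ.1) < ⟨j₂, h₂⟩ from h)
    by_cases h₁ : (j₁ : ℕ) < δ.1
    · have := (tildeT_le_iff hδ j₁).2 h₁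
      have := hbig ⟨m - 1 - j₂, by omega⟩
      rw [tildeT_of_le hδ j₂ (by omega)]
      omega
    · have hlt := ((omittedRows m δ).orderEmbOfFin (card_omittedRows hδ)).strictMono
        (show (⟨m - 1 - j₂, by omega⟩ : Fin (m - δ.1)) < ⟨m - 1 - j₁, by omega⟩ by
          rw [Fin.mk_lt_mk]; omega)
      have := hbig ⟨m - 1 - j₁, by omega⟩
      rw [tildeT_of_le hδ j₁ (by omega), tildeT_of_le hδ j₂ (by omega)]
      omega
  · by_cases hj : (j : ℕ) < δ.1
    · have := hδ.2.2.2.2.2 ⟨j, hj⟩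
      rw [tildeT_of_lt j hj]
      omega
    · have := hbig ⟨m - 1 - j, by omega⟩
      rw [tildeT_of_le hδ j (by omega)]
      omega

theorem sum_tildeT_of_lt :
    ∑ j ∈ univ.filter (fun j : Fin m => (j : ℕ) < δ.1), tildeT m n δ j = ∑ i, δ.2.2 i := by
  have hr := fst_le_of_mem_deltaSet hδ
  refine sum_bij' (fun j hj => ⟨j, (mem_filter.1 hj).2⟩) (fun i _ => Fin.castLE hr i)
    (fun _ _ => mem_univ _) (fun i _ => mem_filter.2 ⟨mem_univ _, i.2⟩)
    (fun _ _ => rfl) (fun _ _ => rfl) (fun j hj => tildeT_of_lt j _)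

theorem sum_tildeT_of_le_add_sum_rows :
    ∑ j ∈ univ.filter (fun j : Fin m => δ.1 ≤ j), (m + n + 1 - tildeT m n δ j) +
      ∑ i, δ.2.1 i = ∑ x ∈ Icc 1 m, x := by
  have hcard := card_omittedRows hδ
  have hrows : ∑ j ∈ univ.filter (fun j : Fin m => δ.1 ≤ j), (m + n + 1 - tildeT m n δ j) =
      ∑ x ∈ omittedRows m δ, x := by
    rw [← map_orderEmbOfFin_univ _ hcard, sum_map]
    refine sum_bij' (fun j hj => ⟨m - 1 - j, by have := (mem_filter.1 hj).2; omega⟩)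
      (fun q _ => ⟨m - 1 - q, by omega⟩) (fun _ _ => mem_univ _)
      (fun q _ => mem_filter.2 ⟨mem_univ _, by simp only; omega⟩)
      (fun j hj => Fin.ext (by simp only; omega)) (fun q _ => Fin.ext (by simp only; omega))
      (fun j hj => ?_)
    have := mem_Icc.1 (mem_Icc_of_mem_omittedRows (orderEmbOfFin_mem _ hcard
      ⟨m - 1 - j, by have := (mem_filter.1 hj).2; omega⟩))
    rw [tildeT_of_le hδ j (mem_filter.1 hj).2]
    simp only [RelEmbedding.coe_toEmbedding]
    omega
  have hcols : ∑ i, δ.2.1 i = ∑ x ∈ image δ.2.1 univ, x :=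
    (sum_image (f := fun x => x) fun _ _ _ _ h => hδ.2.2.1.injective h).symm
  rw [hrows, hcols, omittedRows, sum_sdiff (image_rows_subset_Icc hδ)]

end Correspondence

section Phi

open Finset

theorem sum_sort_getD {A : Finset ℕ} {s : ℕ} (h : #A = s) :
    ∑ i : Fin s, (A.sort (· ≤ ·)).getD i 0 = ∑ x ∈ A, x := by
  calc ∑ i : Fin s, (A.sort (· ≤ ·)).getD i 0
      = ∑ i, (A.orderEmbOfFin h).toEmbedding i := sum_congr rfl fun i _ => by
        rw [List.getD_eq_getElem _ _ (by rw [length_sort, h]; exact i.2),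
          RelEmbedding.coe_toEmbedding, orderEmbOfFin_apply]
        rfl
    _ = ∑ x ∈ univ.map (A.orderEmbOfFin h).toEmbedding, x := (sum_map _ _ fun x => x).symm
    _ = ∑ x ∈ A, x := by rw [map_orderEmbOfFin_univ]

variable {m n : ℕ} {σ : Fin m → ℕ}

theorem phiT_fst (hσ : σ.Injective) :
    (phiT m n σ).1 = #(univ.filter fun j => σ j ≤ n) := by
  unfold phiT
  dsimp only
  exact card_image_of_injective _ hσ

theorem sum_phiT_cols (hσ : σ.Injective) {s : ℕ} (hs : s ≤ (phiT m n σ).1)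
    (hcard : #(univ.filter fun j => σ j ≤ n) = s) :
    ∑ i : Fin s, (phiT m n σ).2.2 (Fin.castLE hs i) =
      ∑ j ∈ univ.filter (fun j => σ j ≤ n), σ j :=
  (sum_sort_getD ((card_image_of_injective _ hσ).trans hcard)).trans
    (sum_image fun _ _ _ _ h => hσ h)

theorem sum_phiT_rows_add (hσ : σ ∈ GammaSet m (m + n)) {s : ℕ} (hs : s ≤ (phiT m n σ).1)
    (hcard : #(univ.filter fun j => σ j ≤ n) = s) :
    ∑ i : Fin s, (phiT m n σ).2.1 (Fin.castLE hs i) +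
      ∑ j ∈ univ.filter (fun j => n < σ j), (m + n + 1 - σ j) = ∑ x ∈ Icc 1 m, x := by
  set B := (univ.filter fun j => n < σ j).image fun j => m + n + 1 - σ j
  have hinj : Set.InjOn (fun j => m + n + 1 - σ j) (univ.filter fun j => n < σ j) :=
    fun j _ j' _ h => hσ.1.injective <| by
      have := (hσ.2 j).2
      have := (hσ.2 j').2
      simp only at h
      omega
  have hB : B ⊆ Icc 1 m := by
    intro x hx
    obtain ⟨j, hj, rfl⟩ := mem_image.1 hx
    have := (mem_filter.1 hj).2
    have := (hσ.2 j).2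
    exact mem_Icc.2 ⟨by omega, by omega⟩
  have hBcard : #B + s = m := by
    rw [card_image_of_injOn hinj, ← hcard, add_comm]
    simpa [not_le] using card_filter_add_card_filter_not (s := univ) (fun j => σ j ≤ n)
  have hrows : #(Icc 1 m \ B) = s := by
    rw [card_sdiff_of_subset hB, Nat.card_Icc]
    omega
  have hsum : ∑ i : Fin s, (phiT m n σ).2.1 (Fin.castLE hs i) = ∑ x ∈ Icc 1 m \ B, x :=
    sum_sort_getD hrows
  rw [hsum, ← sum_image (f := fun x => x) hinj, sum_sdiff hB]

end Phi

section Comparison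

open Finset

variable {m n : ℕ} {δ : DeltaTuple} {σ : Fin m → ℕ}

theorem filter_le_eq_filter_lt_of_tildeT_le (hδ : δ ∈ DeltaSet m n) (hσ : σ.Injective)
    (hle : tildeT m n δ ≤ σ) (hsz : δ.1 ≤ (phiT m n σ).1) :
    univ.filter (fun j => σ j ≤ n) = univ.filter (fun j : Fin m => (j : ℕ) < δ.1) := by
  refine eq_of_subset_of_card_le (fun j hj => ?_) ?_
  · simp only [mem_filter, mem_univ, true_and] at hj ⊢
    exact (tildeT_le_iff hδ j).1 ((hle j).trans hj)
  · rw [← phiT_fst hσ, Fin.card_filter_val_lt, min_eq_right (fst_le_of_mem_deltaSet hδ)]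
    exact hsz

theorem not_deltaLE_phiT_of_tildeT_lt (hδ : δ ∈ DeltaSet m n) (hσ : σ ∈ GammaSet m (m + n))
    (hlt : tildeT m n δ < σ) :
    ¬ deltaLE (phiT m n σ) δ := by
  rintro ⟨hsz, hcomp⟩
  obtain ⟨hle, j₀, hj₀⟩ := Pi.lt_def.1 hlt
  have hr := fst_le_of_mem_deltaSet hδ
  have hsmall := filter_le_eq_filter_lt_of_tildeT_le hδ hσ.1.injective hle hsz
  have hcard : #(univ.filter fun j => σ j ≤ n) = δ.1 := by
    rw [hsmall, Fin.card_filter_val_lt, min_eq_right hr]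
  have hbig : univ.filter (fun j => n < σ j) = univ.filter (fun j : Fin m => δ.1 ≤ j) := by
    ext j
    have := congrArg (j ∈ ·) hsmall
    simp only [mem_filter, mem_univ, true_and, eq_iff_iff] at this ⊢
    omega
  have hcols : ∑ j ∈ univ.filter (fun j : Fin m => (j : ℕ) < δ.1), σ j ≤
      ∑ j ∈ univ.filter (fun j : Fin m => (j : ℕ) < δ.1), tildeT m n δ j :=
    calc _ = ∑ i : Fin δ.1, (phiT m n σ).2.2 (Fin.castLE hsz i) := by
          rw [← hsmall]; exact (sum_phiT_cols hσ.1.injective hsz hcard).symm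
      _ ≤ ∑ i, δ.2.2 i := sum_le_sum fun i _ => (hcomp i).2
      _ = _ := (sum_tildeT_of_lt hδ).symm
  have hrows : ∑ j ∈ univ.filter (fun j : Fin m => δ.1 ≤ j), (m + n + 1 - tildeT m n δ j) ≤
      ∑ j ∈ univ.filter (fun j : Fin m => δ.1 ≤ j), (m + n + 1 - σ j) := by
    have hσrows := sum_phiT_rows_add hσ hsz hcard
    have hδrows := sum_tildeT_of_le_add_sum_rows hδ
    have hcomp₁ : ∑ i : Fin δ.1, (phiT m n σ).2.1 (Fin.castLE hsz i) ≤ ∑ i, δ.2.1 i :=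
      sum_le_sum fun i _ => (hcomp i).1
    rw [hbig] at hσrows
    omega
  by_cases hj : (j₀ : ℕ) < δ.1
  · have := (sum_eq_sum_iff_of_le fun j _ => hle j).1
      (le_antisymm (sum_le_sum fun j _ => hle j) hcols) j₀ (by simpa using hj)
    omega
  · have := (sum_eq_sum_iff_of_le fun j _ => Nat.sub_le_sub_left (hle j) (m + n + 1)).1
      (le_antisymm (sum_le_sum fun j _ => Nat.sub_le_sub_left (hle j) _) hrows) j₀
      (by simpa using hj)
    have := (hσ.2 j₀).2
    omega

end Comparison

theorem exists_size_bound_detRing_general {m n : ℕ}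
    (δ : DeltaTuple) (hδ : δ ∈ DeltaSet m n)
    (t : ℕ) (k : ℕ → ℕ) (hbd : IsBlockData m (m + n) (tildeT m n δ) t k)
    (i : ℕ) (hit : i ≤ t) :
    ∃ N, 1 ≤ N ∧ N ≤ δ.1 ∧
      (∀ θ ∈ DeltaSet m n, deltaLE δ θ →
        ¬ deltaLE (phiT m n (sigmaT m (m + n) (tildeT m n δ) k i)) θ → N ≤ θ.1) ∧
      (∀ s, N ≤ s → ∀ hs : s ≤ δ.1,
        deltaLE δ
          ⟨s, fun j => δ.2.1 (Fin.castLE hs j), fun j => δ.2.2 (Fin.castLE hs j)⟩ ∧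
        ¬ deltaLE (phiT m n (sigmaT m (m + n) (tildeT m n δ) k i))
          ⟨s, fun j => δ.2.1 (Fin.castLE hs j), fun j => δ.2.2 (Fin.castLE hs j)⟩) := by
  have hδ' := tildeT_mem_gammaSet hδ
  obtain ⟨N, hN1, hNr, hsize, htrunc⟩ := exists_size_bound_of_not_deltaLE
    (not_deltaLE_phiT_of_tildeT_lt hδ (sigmaT_mem_gammaSet hδ' hbd hit) (lt_sigmaT hδ' hbd hit))
  exact ⟨N, hN1, hNr, fun θ _ => hsize θ, htrunc⟩

/-- For each `1 ≤ i ≤ t` there is `1 ≤ N_i ≤ r` such that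
(1) every `θ = [e|f] ∈ Δ(m,n)` with `θ ≥ δ` and `θ ≱ τ_i` has size `≥ N_i`, and
(2) for every `N_i ≤ s ≤ r` the truncation `[c_1,…,c_s | d_1,…,d_s]` satisfies
`≥ δ` and `≱ τ_i`. -/
theorem exists_size_bound_detRing {m n : ℕ} (hm : 0 < m) (hn : 0 < n)
    (δ : DeltaTuple) (hδ : δ ∈ DeltaSet m n)
    (t : ℕ) (k : ℕ → ℕ) (hbd : IsBlockData m (m + n) (tildeT m n δ) t k)
    (i : ℕ) (hi1 : 1 ≤ i) (hit : i ≤ t) :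
    ∃ N, 1 ≤ N ∧ N ≤ δ.1 ∧
      (∀ θ ∈ DeltaSet m n, deltaLE δ θ →
        ¬ deltaLE (phiT m n (sigmaT m (m + n) (tildeT m n δ) k i)) θ → N ≤ θ.1) ∧
      (∀ s, N ≤ s → ∀ hs : s ≤ δ.1,
        deltaLE δ
          ⟨s, fun j => δ.2.1 (Fin.castLE hs j), fun j => δ.2.2 (Fin.castLE hs j)⟩ ∧
        ¬ deltaLE (phiT m n (sigmaT m (m + n) (tildeT m n δ) k i))
          ⟨s, fun j => δ.2.1 (Fin.castLE hs j), fun j => δ.2.2 (Fin.castLE hs j)⟩) :=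
  exists_size_bound_detRing_general δ hδ t k hbd i hit
end

section
/- Let R be a Noetherian commutative ring, M a finitely generated R-module, and y ∈ R a non-zerodivisor on R such that multiplication by y on Ext^1_R(M,R) is injective. Set A = R/(y). Then the natural A-linear map Hom_R(M,R) ⊗_R A → Hom_A(M ⊗_R A, A), induced by composing R-linear maps M → R with the projection R → A, is an isomorphism. In particular, every R-linear map M → A lifts to an R-linear map M → R. -/
/-! The obstruction to lifting `g : M → A` along `R → A` is its image under the connecting map
`Hom(M, A) → Ext¹(M, R)` of `0 → R --y--> R → A → 0`, a class killed by `y`. On a projective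
resolution `P → M`: lift `P₀ → M → A` to `G : P₀ → R`; then `d₁ ≫ G = y • H` with `H` a cocycle,
and `y • [H] = [d₁ ≫ G] = 0` forces `H = d₁ ≫ K`, so `G - y • K` descends to a lift `M → R`.
Since `Hom_A(A ⊗ M, A) ≃ Hom_R(M, A)` and `f ⊗ 1 ↦ f mod y`, the lifts give surjectivity, and
injectivity holds because `f mod y = 0` means `f = y • H`, so `f ⊗ 1 = 0`. -/

open scoped TensorProduct

open CategoryTheory

noncomputable section

universe u

section NatMap

variable (R : Type u) [CommRing R] (M : Type u) [AddCommGroup M] [Module R M] (y : R)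

/-- The natural map `Hom_R(M,R) ⊗_R A → Hom_A(M ⊗_R A, A)`, for `A = R/(y)`,
sending `f ⊗ ā` to the `A`-linear map determined by `ā ⊗ m ↦ ā·(f m mod y)`. -/
def homTensorQuotMap :
    ((M →ₗ[R] R) ⊗[R] (R ⧸ Ideal.span {y})) →ₗ[R]
      (((R ⧸ Ideal.span {y}) ⊗[R] M) →ₗ[R ⧸ Ideal.span {y}] (R ⧸ Ideal.span {y})) :=
  TensorProduct.lift
    (LinearMap.mk₂ R
      (fun f a => a • LinearMap.liftBaseChangeEquiv (R ⧸ Ideal.span {y})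
        ((Algebra.linearMap R (R ⧸ Ideal.span {y})).comp f))
      (fun f f' a => by
        simp only [LinearMap.comp_add, map_add, smul_add])
      (fun c f a => by
        simp only [LinearMap.comp_smul]
        rw [← algebraMap_smul (R ⧸ Ideal.span {y}) c
            ((Algebra.linearMap R (R ⧸ Ideal.span {y})).comp f),
          map_smul, smul_comm, algebraMap_smul])
      (fun f a a' => by simp only [add_smul])
      (fun c f a => by simp only [smul_assoc]))

end NatMap

lemma TensorProduct.exists_eq_tmul_one {R N : Type*} [CommRing R] [AddCommGroup N] [Module R N]
    (I : Ideal R) (t : N ⊗[R] (R ⧸ I)) : ∃ n : N, t = n ⊗ₜ 1 := by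
  induction t using TensorProduct.induction_on with
  | zero => exact ⟨0, (TensorProduct.zero_tmul _ _).symm⟩
  | tmul n a =>
    obtain ⟨r, rfl⟩ := Ideal.Quotient.mk_surjective a
    refine ⟨r • n, ?_⟩
    rw [TensorProduct.smul_tmul, ← Ideal.Quotient.algebraMap_eq, Algebra.algebraMap_eq_smul_one]
  | add u v hu hv =>
    obtain ⟨n, rfl⟩ := hu
    obtain ⟨n', rfl⟩ := hv
    exact ⟨n + n', (TensorProduct.add_tmul _ _ _).symm⟩

section

variable {R : Type u} [CommRing R] {y : R}

lemma LinearMap.exists_eq_smul_of_comp_eq_zero {N : Type*} [AddCommGroup N] [Module R N]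
    (hy : y ∈ nonZeroDivisors R) (h : N →ₗ[R] R)
    (hh : (Algebra.linearMap R (R ⧸ Ideal.span {y})).comp h = 0) :
    ∃ H : N →ₗ[R] R, h = y • H := by
  have hdvd (n : N) : y ∣ h n := by
    rw [← Ideal.mem_span_singleton, ← Ideal.Quotient.eq_zero_iff_mem]
    exact LinearMap.congr_fun hh n
  choose c hc using hdvd
  have cancel : IsLeftRegular y := (isRegular_iff_mem_nonZeroDivisors.mpr hy).left
  refine ⟨{ toFun := c, map_add' := fun a b => ?_, map_smul' := fun r a => ?_ }, ?_⟩
  · exact cancel (by simp only [← hc, map_add, mul_add])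
  · refine cancel ?_
    simp only [RingHom.id_apply, smul_eq_mul]
    rw [← hc, map_smul, smul_eq_mul, hc]
    ring
  · ext n
    exact hc n

lemma ModuleCat.eq_zero_of_smul_eq_zero (hy : y ∈ nonZeroDivisors R) {X : ModuleCat.{u} R}
    {φ : X ⟶ ModuleCat.of R R} (h : y • φ = 0) : φ = 0 := by
  ext x
  refine mem_nonZeroDivisors_iff_right.mp hy _ ?_
  rw [mul_comm]
  exact congr($h x)

lemma ModuleCat.injective_smul_of_iso {X Y : ModuleCat.{u} R} (e : X ≅ Y)
    (h : Function.Injective fun x : X => y • x) : Function.Injective fun x : Y => y • x := by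
  intro a b hab
  apply e.toLinearEquiv.symm.injective
  apply h
  simp only [← map_smul]
  exact congrArg _ hab

lemma CategoryTheory.ShortComplex.exists_f_eq_of_smul_eq_f (S : ShortComplex (ModuleCat.{u} R))
    (hS : Function.Injective fun z : S.homology => y • z) {x : S.X₂} (hx : S.g x = 0)
    {z : S.X₁} (hz : S.f z = y • x) : ∃ w, S.f w = x := by
  have hinj := ModuleCat.injective_smul_of_iso S.moduleCatHomologyIso hS
  let c : S.moduleCatLeftHomologyData.K := ⟨x, hx⟩
  have hc : S.moduleCatLeftHomologyData.π c = 0 := by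
    apply hinj
    beta_reduce
    rw [smul_zero, ← map_smul]
    have : y • c = S.moduleCatToCycles z := Subtype.ext hz.symm
    rw [this]
    exact (Submodule.Quotient.mk_eq_zero _).mpr (LinearMap.mem_range_self _ z)
  obtain ⟨w, hw⟩ := (Submodule.Quotient.mk_eq_zero _).mp hc
  exact ⟨w, congrArg Subtype.val hw⟩

theorem exists_comp_eq_of_injective_smul_Ext_one (M : Type u) [AddCommGroup M] [Module R M]
    (hy : y ∈ nonZeroDivisors R)
    (hext : Function.Injective (fun z : ((Ext R (ModuleCat.{u} R) 1).obj
      (Opposite.op (ModuleCat.of R M))).obj (ModuleCat.of R R) => y • z))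
    (g : M →ₗ[R] R ⧸ Ideal.span {y}) :
    ∃ f : M →ₗ[R] R, (Algebra.linearMap R (R ⧸ Ideal.span {y})).comp f = g := by
  let P := ProjectiveResolution.of (ModuleCat.of R M)
  let π : P.complex.X 0 ⟶ ModuleCat.of R M := P.π.f 0
  have hπ : P.complex.d 1 0 ≫ π = 0 := P.complex_d_comp_π_f_zero
  let q := ModuleCat.ofHom (Algebra.linearMap R (R ⧸ Ideal.span {y}))
  have : Epi q := (ModuleCat.epi_iff_surjective q).mpr Ideal.Quotient.mk_surjective
  have hq : y • q = 0 := by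
    ext
    simp [q, Algebra.smul_def]
  let G := Projective.factorThru (π ≫ ModuleCat.ofHom g) q
  have hG : G ≫ q = π ≫ ModuleCat.ofHom g := Projective.factorThru_comp _ _
  obtain ⟨H, hH⟩ := LinearMap.exists_eq_smul_of_comp_eq_zero hy (P.complex.d 1 0 ≫ G).hom
    (congrArg ModuleCat.Hom.hom (show (P.complex.d 1 0 ≫ G) ≫ q = 0 by
      rw [Category.assoc, hG, reassoc_of% hπ, Limits.zero_comp]))
  replace hH : P.complex.d 1 0 ≫ G = y • ModuleCat.ofHom H := ModuleCat.hom_ext hH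
  let S := (P.complex.linearYonedaObj R (ModuleCat.of R R)).sc' 0 1 2
  have hS : Function.Injective fun z : S.homology => y • z :=
    ModuleCat.injective_smul_of_iso (P.isoExt 1 _ ≪≫
      (P.complex.linearYonedaObj R _).homologyIsoSc' 0 1 2 (by simp) (by simp)) hext
  have hcocycle : S.g (ModuleCat.ofHom H) = 0 := by
    change P.complex.d 2 1 ≫ ModuleCat.ofHom H = 0
    apply ModuleCat.eq_zero_of_smul_eq_zero hy
    rw [← Linear.comp_smul, ← hH, P.complex.d_comp_d_assoc, Limits.zero_comp]
  obtain ⟨K, hK⟩ :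
      ∃ K : P.complex.X 0 ⟶ ModuleCat.of R R, P.complex.d 1 0 ≫ K = ModuleCat.ofHom H :=
    S.exists_f_eq_of_smul_eq_f hS hcocycle (z := G) hH
  obtain ⟨f, hf⟩ : ∃ f : ModuleCat.of R M ⟶ ModuleCat.of R R, π ≫ f = G - y • K :=
    ⟨_, (Limits.CokernelCofork.IsColimit.desc' P.isColimitCokernelCofork (G - y • K)
      (by rw [Preadditive.comp_sub, Linear.comp_smul, hK, hH, sub_self])).2⟩
  have : Epi π := inferInstanceAs (Epi (P.π.f 0))
  refine ⟨f.hom, congrArg ModuleCat.Hom.hom ((cancel_epi π).mp (?_ : π ≫ f ≫ q = _))⟩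
  rw [reassoc_of% hf, Preadditive.sub_comp, hG, Linear.smul_comp, ← Linear.comp_smul, hq,
    Limits.comp_zero, sub_zero]
  rfl

variable {M : Type u} [AddCommGroup M] [Module R M]

lemma homTensorQuotMap_tmul_one (f : M →ₗ[R] R) :
    homTensorQuotMap R M y (f ⊗ₜ 1) = LinearMap.liftBaseChangeEquiv (R ⧸ Ideal.span {y})
      ((Algebra.linearMap R (R ⧸ Ideal.span {y})).comp f) :=
  (TensorProduct.lift.tmul _ _).trans (one_smul _ _)

lemma homTensorQuotMap_injective (hy : y ∈ nonZeroDivisors R) :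
    Function.Injective (homTensorQuotMap R M y) := by
  refine (injective_iff_map_eq_zero _).mpr fun t ht => ?_
  obtain ⟨f, rfl⟩ := TensorProduct.exists_eq_tmul_one _ t
  rw [homTensorQuotMap_tmul_one, LinearEquiv.map_eq_zero_iff] at ht
  obtain ⟨H, rfl⟩ := LinearMap.exists_eq_smul_of_comp_eq_zero hy f ht
  rw [TensorProduct.smul_tmul, ← Algebra.algebraMap_eq_smul_one, Ideal.Quotient.algebraMap_eq,
    Ideal.Quotient.eq_zero_iff_mem.mpr (Ideal.mem_span_singleton_self y), TensorProduct.tmul_zero]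

lemma homTensorQuotMap_surjective
    (hlift : ∀ g : M →ₗ[R] (R ⧸ Ideal.span {y}), ∃ f : M →ₗ[R] R,
        (Algebra.linearMap R (R ⧸ Ideal.span {y})).comp f = g) :
    Function.Surjective (homTensorQuotMap R M y) := by
  intro φ
  obtain ⟨f, hf⟩ := hlift ((LinearMap.liftBaseChangeEquiv (R ⧸ Ideal.span {y})).symm φ)
  exact ⟨f ⊗ₜ 1, by rw [homTensorQuotMap_tmul_one, hf, LinearEquiv.apply_symm_apply]⟩

end

theorem homTensorQuotMap_bijective_general
    (R : Type u) [CommRing R]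
    (M : Type u) [AddCommGroup M] [Module R M]
    (y : R) (hy : y ∈ nonZeroDivisors R)
    (hext : Function.Injective
      (fun z : ((Ext R (ModuleCat.{u} R) 1).obj
          (Opposite.op (ModuleCat.of R M))).obj (ModuleCat.of R R) => y • z)) :
    Function.Bijective (homTensorQuotMap R M y) ∧
      ∀ g : M →ₗ[R] (R ⧸ Ideal.span {y}), ∃ f : M →ₗ[R] R,
        (Algebra.linearMap R (R ⧸ Ideal.span {y})).comp f = g := by
  have hlift := exists_comp_eq_of_injective_smul_Ext_one M hy hext
  exact ⟨⟨homTensorQuotMap_injective hy, homTensorQuotMap_surjective hlift⟩, hlift⟩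

/-- Let `R` be Noetherian, `M` finitely generated, `y` a
non-zerodivisor on `R` such that multiplication by `y` on `Ext¹_R(M,R)` is
injective, and `A = R/(y)`.  Then the natural map
`Hom_R(M,R) ⊗_R A → Hom_A(M ⊗_R A, A)` is an isomorphism; in particular every
`R`-linear map `M → A` lifts to an `R`-linear map `M → R`. -/
theorem homTensorQuotMap_bijective
    (R : Type u) [CommRing R] [IsNoetherianRing R]
    (M : Type u) [AddCommGroup M] [Module R M] [Module.Finite R M]
    (y : R) (hy : y ∈ nonZeroDivisors R)
    (hext : Function.Injective
      (fun z : ((Ext R (ModuleCat.{u} R) 1).obj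
          (Opposite.op (ModuleCat.of R M))).obj (ModuleCat.of R R) => y • z)) :
    Function.Bijective (homTensorQuotMap R M y) ∧
      ∀ g : M →ₗ[R] (R ⧸ Ideal.span {y}), ∃ f : M →ₗ[R] R,
        (Algebra.linearMap R (R ⧸ Ideal.span {y})).comp f = g :=
  homTensorQuotMap_bijective_general R M y hy hext

end
end

section
/- Let R be a commutative ring and M, N R-modules. If the evaluation map M ⊗_R Hom_R(M,N) → N, x ⊗ f ↦ f(x), is surjective, then tr_R(N) ⊆ tr_R(M). Consequently, if in addition the evaluation map N ⊗_R Hom_R(N,M) → M is surjective, then tr_R(M) = tr_R(N). In particular, any two canonical modules of a Cohen–Macaulay ring have the same trace ideal. -/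
open scoped TensorProduct

noncomputable section

/-- The evaluation map `M ⊗_R Hom_R(M,N) → N`, `x ⊗ f ↦ f x`. -/
def evalMap (R : Type*) [CommRing R] (M N : Type*) [AddCommGroup M] [Module R M]
    [AddCommGroup N] [Module R N] : M ⊗[R] (M →ₗ[R] N) →ₗ[R] N :=
  TensorProduct.lift (LinearMap.id (R := R) (M := M →ₗ[R] N)).flip

lemma traceIdeal_le_aux (R : Type*) [CommRing R]
    (M N : Type*) [AddCommGroup M] [Module R M] [AddCommGroup N] [Module R N]
    (hMN : Function.Surjective (evalMap R M N)) :
    traceIdeal R N ≤ traceIdeal R M := by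
  rw [traceIdeal, iSup_le_iff]
  intro f x hx
  obtain ⟨n, rfl⟩ := hx
  obtain ⟨t, rfl⟩ := hMN n
  induction t with
  | zero => simp
  | tmul m g =>
      have : f (evalMap R M N (m ⊗ₜ[R] g)) = (f.comp g) m := rfl
      rw [this]
      exact le_iSup (fun h : M →ₗ[R] R => LinearMap.range h) (f.comp g)
        ⟨m, rfl⟩
  | add a b ha hb =>
      rw [map_add, map_add]
      exact Ideal.add_mem _ ha hb

/-- If the evaluation map `M ⊗_R Hom_R(M,N) → N` is surjective
then `tr_R(N) ⊆ tr_R(M)`; if moreover the evaluation map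
`N ⊗_R Hom_R(N,M) → M` is surjective, then `tr_R(M) = tr_R(N)`. -/
theorem traceIdeal_le_of_eval_surjective (R : Type*) [CommRing R]
    (M N : Type*) [AddCommGroup M] [Module R M] [AddCommGroup N] [Module R N]
    (hMN : Function.Surjective (evalMap R M N)) :
    traceIdeal R N ≤ traceIdeal R M ∧
      (Function.Surjective (evalMap R N M) → traceIdeal R M = traceIdeal R N) := by
  refine ⟨traceIdeal_le_aux R M N hMN, fun hNM => le_antisymm
    (traceIdeal_le_aux R N M hNM) (traceIdeal_le_aux R M N hMN)⟩

end
end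

section
/- Let m ≤ n be positive integers and γ = (a_1,…,a_m) ∈ Γ(m,n) with γ ≠ (n−m+1,…,n), with block data k(0),…,k(t+1) and tuples ζ_0,…,ζ_t. If α ∈ Γ(m,n) satisfies α ≥ γ and α ≱ ζ_i for every 0 ≤ i ≤ t, then α = γ. -/
open scoped BigOperators TensorProduct

set_option maxHeartbeats 1000000
set_option synthInstance.maxHeartbeats 400000

/-! Compare `α` with `γ` from the right, starting from the common value `a_{m+1} = N + 1`.
If `γ` has a gap after position `j`, then `j = k(i)` for some `i ≥ 1`, and `α_j > γ_j` would give
`ζ_{i-1} ≤ α`. Otherwise `γ_{j+1} ≤ γ_j + 1`, so `α_j < α_{j+1} ≤ γ_{j+1}` forces `α_j ≤ γ_j`. -/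

section GammaSet

variable {m N : ℕ}

lemma exists_fin_coe_add_one_eq {j : ℕ} (hj₁ : 1 ≤ j) (hjm : j ≤ m) :
    ∃ i : Fin m, (i : ℕ) + 1 = j :=
  ⟨⟨j - 1, by omega⟩, by simp; omega⟩

lemma aext_coe_add_one (a : Fin m → ℕ) (j : Fin m) : aext m N a ((j : ℕ) + 1) = a j := by
  simp [aext]

lemma aext_of_lt (a : Fin m → ℕ) {j : ℕ} (hj : m < j) : aext m N a j = N + 1 := by
  simp [aext, show ¬ j - 1 < m by omega]

lemma aext_lt_aext_add_one {a : Fin m → ℕ} (ha : a ∈ GammaSet m N) {j : ℕ} (hj₁ : 1 ≤ j)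
    (hjm : j ≤ m) : aext m N a j < aext m N a (j + 1) := by
  obtain ⟨j, rfl⟩ := exists_fin_coe_add_one_eq hj₁ hjm
  rw [aext_coe_add_one]
  by_cases hlast : (j : ℕ) + 1 < m
  · have hlt : j < (⟨j + 1, hlast⟩ : Fin m) := Fin.lt_def.2 (by simp)
    simpa [← aext_coe_add_one (N := N) a ⟨j + 1, hlast⟩] using ha.1 hlt
  · rw [aext_of_lt a (by omega)]
    exact Nat.lt_succ_of_le (ha.2 j).2

lemma le_of_le_at_gaps {α γ : Fin m → ℕ} (hα : α ∈ GammaSet m N)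
    (hgap : ∀ j, 1 ≤ j → j ≤ m → 1 < aext m N γ (j + 1) - aext m N γ j →
      aext m N α j ≤ aext m N γ j) :
    α ≤ γ := by
  have key : ∀ j, 1 ≤ j → j ≤ m + 1 → aext m N α j ≤ aext m N γ j := by
    intro j hj₁ hjm
    induction hjm using Nat.decreasingInduction with
    | self => simp [aext_of_lt]
    | of_succ j hjm ih =>
      by_cases hg : 1 < aext m N γ (j + 1) - aext m N γ j
      · exact hgap j hj₁ (by omega) hg
      · have := aext_lt_aext_add_one hα hj₁ (by omega)
        have := ih (by omega)
        omega
  intro j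
  simpa [aext_coe_add_one] using key (j + 1) (by omega) (by omega)

lemma zetaT_le_of_lt {γ α : Fin m → ℕ} {k : ℕ → ℕ} {i : ℕ} {j : Fin m}
    (hγα : γ ≤ α) (hj : (j : ℕ) + 1 = k (i + 1)) (hlt : γ j < α j) : zetaT m γ k i ≤ α := by
  intro j'
  by_cases hj' : (j' : ℕ) + 1 = k (i + 1)
  · obtain rfl : j' = j := Fin.ext (by omega)
    simpa [zetaT, hj'] using hlt
  · simpa [zetaT, hj'] using hγα j'

lemma aext_le_of_not_zetaT_le {t : ℕ} {γ α : Fin m → ℕ} {k : ℕ → ℕ}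
    (hbd : IsBlockData m N γ t k) (hγα : γ ≤ α) (hζ : ∀ i, i ≤ t → ¬ zetaT m γ k i ≤ α)
    {j : ℕ} (hj₁ : 1 ≤ j) (hjm : j ≤ m) (hg : 1 < aext m N γ (j + 1) - aext m N γ j) :
    aext m N α j ≤ aext m N γ j := by
  obtain ⟨i, hi₁, hit, hki⟩ := (hbd.2.2 j).2 ⟨hj₁, hjm, hg⟩
  obtain ⟨j, rfl⟩ := exists_fin_coe_add_one_eq hj₁ hjm
  rw [aext_coe_add_one, aext_coe_add_one]
  by_contra! hlt
  exact hζ (i - 1) (by omega) (zetaT_le_of_lt hγα (by rw [Nat.sub_add_cancel hi₁, hki]) hlt)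

end GammaSet

theorem eq_of_ge_of_not_ge_zeta_general {m n : ℕ}
    (γ : Fin m → ℕ)
    (t : ℕ) (k : ℕ → ℕ) (hbd : IsBlockData m n γ t k)
    (α : Fin m → ℕ) (hα : α ∈ GammaSet m n) (hγα : γ ≤ α)
    (hζ : ∀ i, i ≤ t → ¬ zetaT m γ k i ≤ α) : α = γ :=
  le_antisymm (le_of_le_at_gaps hα fun _ hj₁ hjm hg ↦
    aext_le_of_not_zetaT_le hbd hγα hζ hj₁ hjm hg) hγα

/-- If `α ∈ Γ(m,n)` satisfies `α ≥ γ` and `α ≱ ζ_i` for every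
`0 ≤ i ≤ t`, then `α = γ`. -/
theorem eq_of_ge_of_not_ge_zeta {m n : ℕ} (hm : 0 < m) (hmn : m ≤ n)
    (γ : Fin m → ℕ) (hγ : γ ∈ GammaSet m n)
    (hγtop : γ ≠ fun j : Fin m => n - m + 1 + (j : ℕ))
    (t : ℕ) (k : ℕ → ℕ) (hbd : IsBlockData m n γ t k)
    (α : Fin m → ℕ) (hα : α ∈ GammaSet m n) (hγα : γ ≤ α)
    (hζ : ∀ i, i ≤ t → ¬ zetaT m γ k i ≤ α) : α = γ :=
  eq_of_ge_of_not_ge_zeta_general γ t k hbd α hα hγα hζ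
end
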